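/- arXiv:1903.06102 — 2 statements merged into one kernel-verified Lean document; each statement's English description precedes it below -/
import Mathlib

section
/- If U is a unitary operator on H such that U D U* ∈ D+K for every diagonal operator D, then Ad(U) restricts to a *-automorphism of D+K (in particular it is surjective onto D+K). -/
/-!
Ad(U) is injective on D+K and maps it into itself, since `U D U*` lies in D+K for diagonal `D`
and conjugation preserves compactness; its inverse is Ad(U*), so everything hinges on showing
`U* D U ∈ D+K`. For diagonal `D`, `D₂` one has `[U* D U, D₂] = U* [D, U D₂ U*] U`, which is compact
because `U D₂ U*` is diagonal modulo compacts and diagonal operators commute. So it suffices that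
D+K contains every operator `T` that commutes modulo compacts with all diagonal operators (the
image of the diagonal algebra is maximal abelian in the Calkin algebra).

For this, `R := T - diag(T)` has zero diagonal and all corners `P_A R P_Aᶜ` compact, where `P_A`
is the coordinate projection onto `A ⊆ ℕ`. If `R` were not compact, `‖R P_{≥n}‖ ≥ ε` for
infinitely many `n`, and a gliding hump produces unit vectors `x_k` supported in disjoint windows
`W_k = [L_k, L_{k+1})` with `‖P_{W_k} R x_k‖ ≥ ε/4`. Summing `P_S R P_{W∖S}` over all `S ⊆ W`
gives `2^(|W|-2) P_W R P_W` for zero-diagonal `R`, so some `S_k ⊆ W_k` has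
`‖P_{S_k} R P_{W_k∖S_k} x_k‖ ≥ ε/16`. For `A = ⋃ S_k` the compact corner `P_A R P_Aᶜ` then fails
to send the sequence `x_k`, which escapes to infinity, to `0`.
-/

open scoped InnerProductSpace
open ContinuousLinearMap

variable {H : Type*} [NormedAddCommGroup H] [InnerProductSpace ℂ H] [CompleteSpace H]

/-- An operator is diagonal with respect to the fixed orthonormal (Hilbert) basis `e`. -/
def IsDiagonal (e : HilbertBasis ℕ ℂ H) (T : H →L[ℂ] H) : Prop :=
  ∀ n m : ℕ, n ≠ m → ⟪e m, T (e n)⟫_ℂ = 0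

/-- The set `D + K` of sums of a diagonal operator and a compact operator. -/
def DplusK (e : HilbertBasis ℕ ℂ H) : Set (H →L[ℂ] H) :=
  {T | ∃ D K : H →L[ℂ] H, IsDiagonal e D ∧ IsCompactOperator ⇑K ∧ T = D + K}

open Filter Topology Set
open scoped lp ENNReal

section CompactOperator

variable {𝕜 E : Type*} [NontriviallyNormedField 𝕜] [NormedAddCommGroup E] [NormedSpace 𝕜 E]
  {K : E →L[𝕜] E}

theorem IsCompactOperator.clm_mul (hK : IsCompactOperator K) (A : E →L[𝕜] E) :
    IsCompactOperator (A * K) :=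
  hK.clm_comp A

theorem IsCompactOperator.mul_clm (hK : IsCompactOperator K) (B : E →L[𝕜] E) :
    IsCompactOperator (K * B) :=
  hK.comp_clm B

end CompactOperator

theorem tendsto_norm_comp_of_isCompactOperator {𝕜 E F G α : Type*} [NontriviallyNormedField 𝕜]
    [NormedAlgebra ℝ 𝕜] [NormedAddCommGroup E] [NormedSpace 𝕜 E] [NormedAddCommGroup F]
    [NormedSpace 𝕜 F] [NormedAddCommGroup G] [NormedSpace 𝕜 G] {l : Filter α}
    {T : α → F →L[𝕜] G} {C : ℝ} (hT : ∀ a, ‖T a‖ ≤ C) (hT0 : ∀ y, Tendsto (fun a => T a y) l (𝓝 0))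
    {K : E →L[𝕜] F} (hK : IsCompactOperator K) : Tendsto (fun a => ‖T a ∘L K‖) l (𝓝 0) := by
  refine NormedAddGroup.tendsto_nhds_zero.2 fun ε hε => ?_
  obtain ⟨t, -, htf, hcover⟩ := (hK.isCompact_closure_image_closedBall 1).finite_cover_balls
    (e := ε / (4 * (|C| + 1))) (by positivity)
  filter_upwards [htf.eventually_all.2 fun y _ => (hT0 y).norm.eventually_lt_const
    (by rw [norm_zero]; positivity : ‖(0 : G)‖ < ε / 4)] with a ha
  rw [norm_norm]
  refine lt_of_le_of_lt (opNorm_le_of_unit_norm (by positivity) fun x hx => ?_) (half_lt_self hε)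
  obtain ⟨y, hyt, hy⟩ := mem_iUnion₂.1 (hcover (subset_closure ⟨x, by simp [hx], rfl⟩))
  have hTa : ‖T a‖ ≤ |C| + 1 := (hT a).trans ((le_abs_self C).trans (by linarith))
  calc ‖T a (K x)‖ ≤ ‖T a (K x - y)‖ + ‖T a y‖ := by
        simpa using norm_add_le (T a (K x - y)) (T a y)
    _ ≤ ‖T a‖ * ‖K x - y‖ + ‖T a y‖ := by gcongr; exact le_opNorm _ _
    _ ≤ (|C| + 1) * (ε / (4 * (|C| + 1))) + ε / 4 := by
        gcongr
        · rw [← dist_eq_norm]; exact hy.le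
        · exact (ha y hyt).le
    _ = ε / 2 := by field_simp; ring

namespace Finset

theorem card_filter_powerset_mem_and_notMem {ι : Type*} [DecidableEq ι] {F : Finset ι} {i j : ι}
    (hi : i ∈ F) (hj : j ∈ F) (hij : i ≠ j) :
    #{S ∈ F.powerset | i ∈ S ∧ j ∉ S} = 2 ^ (#F - 2) := by
  have h : {S ∈ F.powerset | i ∈ S ∧ j ∉ S} = ((F.erase i).erase j).powerset.image (insert i) := by
    ext S
    simp only [mem_filter, mem_powerset, mem_image]
    constructor
    · rintro ⟨hSF, hiS, hjS⟩
      exact ⟨S.erase i, fun x hx => by grind, insert_erase hiS⟩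
    · rintro ⟨T, hT, rfl⟩
      grind
  rw [h, card_image_of_injOn, card_powerset, card_erase_of_mem (by grind), card_erase_of_mem hi]
  · rfl
  · intro T hT T' hT' hTT'
    have hiT : ∀ {T}, T ∈ ((F.erase i).erase j).powerset → i ∉ T := fun hT h => by
      simpa using mem_powerset.1 hT h
    rw [← erase_insert (hiT hT), hTT', erase_insert (hiT hT')]

theorem sum_powerset_sum_sum_sdiff {ι M : Type*} [DecidableEq ι] [AddCommMonoid M]
    (F : Finset ι) (f : ι → ι → M) (hf : ∀ i, f i i = 0) :
    ∑ S ∈ F.powerset, ∑ i ∈ S, ∑ j ∈ F \ S, f i j = 2 ^ (#F - 2) • ∑ i ∈ F, ∑ j ∈ F, f i j := by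
  have hS : ∀ S ∈ F.powerset, ∑ i ∈ S, ∑ j ∈ F \ S, f i j =
      ∑ i ∈ F, ∑ j ∈ F, if i ∈ S ∧ j ∉ S then f i j else 0 := fun S hS => by
    simp only [ite_and, sum_ite_irrel, sum_const_zero, sum_ite_mem, ← sum_filter,
      ← sdiff_eq_filter, inter_eq_right.2 (mem_powerset.1 hS)]
  rw [sum_congr rfl hS, sum_comm, smul_sum]
  refine sum_congr rfl fun i hi => ?_
  rw [sum_comm, smul_sum]
  refine sum_congr rfl fun j hj => ?_
  rw [← sum_filter, sum_const]
  obtain rfl | hij := eq_or_ne i j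
  · simp [hf]
  · rw [card_filter_powerset_mem_and_notMem hi hj hij]

end Finset

open Function in
theorem Set.compl_iUnion_inter_eq_diff {α ι : Type*} {W S : ι → Set α}
    (hW : Pairwise (Disjoint on W)) (hS : ∀ j, S j ⊆ W j) (k : ι) :
    (⋃ j, S j)ᶜ ∩ W k = W k \ S k := by
  ext n
  simp only [mem_inter_iff, mem_compl_iff, mem_iUnion, not_exists, mem_sdiff]
  refine ⟨fun h => ⟨h.2, h.1 k⟩, fun h => ⟨fun j hj => ?_, h.1⟩⟩
  obtain rfl | hjk := eq_or_ne j k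
  · exact h.2 hj
  · exact (hW hjk).ne_of_mem (hS j hj) h.1 rfl

namespace lp

variable {ι : Type*}

noncomputable def inftyMul (b : ℓ^∞(ι, ℂ)) : ℓ²(ι, ℂ) →L[ℂ] ℓ²(ι, ℂ) :=
  LinearMap.mkContinuous
    { toFun := fun f => ⟨⇑b * ⇑f, ((lp.memℓp f).norm.const_mul ‖b‖).mono fun i => by
        simpa only [Pi.mul_apply, norm_mul] using
          mul_le_mul_of_nonneg_right (norm_apply_le_norm ENNReal.top_ne_zero b i) (norm_nonneg _)⟩
      map_add' := fun f g => lp.ext <| mul_add (⇑b) f g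
      map_smul' := fun c f => lp.ext <| mul_left_comm (⇑b) (fun _ => c) f }
    ‖b‖ fun f => by
      refine (norm_mono two_ne_zero (y := ‖b‖ • f) fun i => ?_).trans_eq
        (by rw [norm_const_smul two_ne_zero, norm_norm])
      simpa [norm_smul] using
        mul_le_mul_of_nonneg_right (norm_apply_le_norm ENNReal.top_ne_zero b i) (norm_nonneg (f i))

@[simp]
theorem inftyMul_apply (b : ℓ^∞(ι, ℂ)) (f : ℓ²(ι, ℂ)) (i : ι) : inftyMul b f i = b i * f i :=
  rfl

end lp

namespace HilbertBasis

section Basic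

variable {ι : Type*} (e : HilbertBasis ι ℂ H)

omit [CompleteSpace H]

protected theorem ext {S T : H →L[ℂ] H} (h : ∀ i, S (e i) = T (e i)) : S = T :=
  ContinuousLinearMap.ext_on (Submodule.dense_iff_topologicalClosure_eq_top.2 e.dense_span)
    (by rintro _ ⟨i, rfl⟩; exact h i)

theorem ext_repr {S T : H →L[ℂ] H} (h : ∀ x i, e.repr (S x) i = e.repr (T x) i) : S = T :=
  ContinuousLinearMap.ext fun x => e.repr.injective (lp.ext (funext (h x)))

noncomputable def diagonal (b : ℓ^∞(ι, ℂ)) : H →L[ℂ] H :=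
  (e.repr.symm.toContinuousLinearEquiv : ℓ²(ι, ℂ) →L[ℂ] H) ∘L lp.inftyMul b ∘L
    (e.repr.toContinuousLinearEquiv : H →L[ℂ] ℓ²(ι, ℂ))

@[simp]
theorem repr_diagonal (b : ℓ^∞(ι, ℂ)) (x : H) (i : ι) :
    e.repr (e.diagonal b x) i = b i * e.repr x i := by
  simp [diagonal]

theorem diagonal_apply_self (b : ℓ^∞(ι, ℂ)) (i : ι) : e.diagonal b (e i) = b i • e i := by
  classical
  refine e.repr.injective (lp.ext (funext fun j => ?_))
  obtain rfl | h := eq_or_ne j i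
  · simp [e.repr_self]
  · simp [e.repr_self, Pi.single_eq_of_ne h]

theorem norm_inner_apply_self_le (T : H →L[ℂ] H) (i : ι) : ‖⟪e i, T (e i)⟫_ℂ‖ ≤ ‖T‖ := by
  calc ‖⟪e i, T (e i)⟫_ℂ‖ ≤ ‖e i‖ * (‖T‖ * ‖e i‖) :=
        (norm_inner_le_norm _ _).trans (mul_le_mul_of_nonneg_left (le_opNorm _ _) (norm_nonneg _))
    _ = ‖T‖ := by simp [e.orthonormal.1 i]

noncomputable def diagonalPart (T : H →L[ℂ] H) : H →L[ℂ] H :=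
  e.diagonal ⟨fun i => ⟪e i, T (e i)⟫_ℂ,
    memℓp_infty ⟨‖T‖, by rintro _ ⟨i, rfl⟩; exact e.norm_inner_apply_self_le T i⟩⟩

theorem inner_diagonalPart_apply_self (T : H →L[ℂ] H) (i : ι) :
    ⟪e i, e.diagonalPart T (e i)⟫_ℂ = ⟪e i, T (e i)⟫_ℂ := by
  simp [diagonalPart, diagonal_apply_self, e.orthonormal.1 i]

/-- The orthogonal projection onto the closed span of `{e i | i ∈ A}`. -/
noncomputable def coordProj (A : Set ι) : H →L[ℂ] H :=
  e.diagonal ⟨A.indicator 1, one_memℓp_infty.mono' fun i => norm_indicator_le_norm_self 1 i⟩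

@[simp]
theorem repr_coordProj (A : Set ι) (x : H) :
    ⇑(e.repr (e.coordProj A x)) = A.indicator ⇑(e.repr x) :=
  funext fun i => by by_cases h : i ∈ A <;> simp [coordProj, h]

theorem coordProj_mul (A B : Set ι) : e.coordProj A * e.coordProj B = e.coordProj (A ∩ B) :=
  e.ext_repr fun x i => by simp [indicator_indicator]

theorem coordProj_apply_eq_self_of_subset {A B : Set ι} (h : A ⊆ B) {x : H}
    (hx : e.coordProj A x = x) : e.coordProj B x = x := by
  rw [← hx, ← mul_apply_eq_comp, coordProj_mul, inter_eq_right.2 h]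

theorem coordProj_union {A B : Set ι} (h : Disjoint A B) :
    e.coordProj (A ∪ B) = e.coordProj A + e.coordProj B :=
  e.ext_repr fun x i => by simp [indicator_union_of_disjoint h]; rfl

@[simp]
theorem coordProj_univ : e.coordProj univ = 1 :=
  e.ext_repr fun x i => by simp

@[simp]
theorem coordProj_empty : e.coordProj ∅ = 0 :=
  e.ext_repr fun x i => by simp

theorem coordProj_compl (A : Set ι) : e.coordProj Aᶜ = 1 - e.coordProj A := by
  rw [eq_sub_iff_add_eq', ← coordProj_union _ disjoint_compl_right, union_compl_self,
    coordProj_univ]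

theorem coordProj_mul_coordProj_compl (A : Set ι) : e.coordProj A * e.coordProj Aᶜ = 0 := by
  rw [coordProj_mul, inter_compl_self, coordProj_empty]

theorem norm_coordProj_apply_le (A : Set ι) (x : H) : ‖e.coordProj A x‖ ≤ ‖x‖ := by
  rw [← e.repr.norm_map, ← e.repr.norm_map x]
  exact lp.norm_mono two_ne_zero fun i => by simpa using norm_indicator_le_norm_self _ i

theorem norm_coordProj_le (A : Set ι) : ‖e.coordProj A‖ ≤ 1 :=
  opNorm_le_bound _ zero_le_one fun x => (one_mul ‖x‖).symm ▸ e.norm_coordProj_apply_le A x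

theorem norm_coordProj_apply_mono {A B : Set ι} (h : A ⊆ B) (x : H) :
    ‖e.coordProj A x‖ ≤ ‖e.coordProj B x‖ := by
  rw [← inter_eq_left.2 h, ← coordProj_mul, mul_apply_eq_comp]
  exact e.norm_coordProj_apply_le A _

theorem coordProj_finset_apply (s : Finset ι) (x : H) :
    e.coordProj s x = ∑ i ∈ s, e.repr x i • e i := by
  have h := e.hasSum_repr (e.coordProj s x)
  simp only [repr_coordProj] at h
  rw [h.unique (hasSum_sum_of_ne_finset_zero (s := s) fun i hi =>
    by simp [indicator_of_notMem (Finset.mem_coe.not.2 hi)])]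
  exact Finset.sum_congr rfl fun i hi => by simp [indicator_of_mem (Finset.mem_coe.2 hi)]

theorem coordProj_singleton_apply (i : ι) (x : H) : e.coordProj {i} x = ⟪e i, x⟫_ℂ • e i := by
  simpa [e.repr_apply_apply] using e.coordProj_finset_apply {i} x

theorem coordProj_singleton_mul_mul_coordProj_singleton (T : H →L[ℂ] H) (i : ι) :
    e.coordProj {i} * T * e.coordProj {i} = ⟪e i, T (e i)⟫_ℂ • e.coordProj {i} := by
  ext x
  simp [coordProj_singleton_apply, smul_smul, mul_comm]

theorem coordProj_finset [DecidableEq ι] (s : Finset ι) :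
    e.coordProj s = ∑ i ∈ s, e.coordProj {i} := by
  induction s using Finset.induction_on with
  | empty => simp
  | insert i s hi ih =>
    rw [Finset.coe_insert, insert_eq, coordProj_union _ (disjoint_singleton_left.2 hi),
      Finset.sum_insert hi, ih]

theorem isCompactOperator_coordProj_finset (s : Finset ι) :
    IsCompactOperator (e.coordProj s) := by
  classical
  rw [coordProj_finset]
  refine Submodule.sum_mem (compactOperator (RingHom.id ℂ) H H) fun i _ => ?_
  have h : ⇑(e.coordProj {i}) = (fun c : ℂ => c • e i) ∘ innerSL ℂ (e i) :=
    funext (e.coordProj_singleton_apply i)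
  change IsCompactOperator _
  exact h ▸ (isCompactOperator_of_locallyCompactSpace_dom _).continuous_comp (by fun_prop)

theorem sum_powerset_coordProj_mul_mul_coordProj_sdiff [DecidableEq ι] {R : H →L[ℂ] H}
    (hR : ∀ i, ⟪e i, R (e i)⟫_ℂ = 0) (F : Finset ι) :
    ∑ S ∈ F.powerset, e.coordProj S * R * e.coordProj ↑(F \ S) =
      2 ^ (F.card - 2) • (e.coordProj F * R * e.coordProj F) := by
  have h (S T : Finset ι) : e.coordProj S * R * e.coordProj T =
      ∑ i ∈ S, ∑ j ∈ T, e.coordProj {i} * R * e.coordProj {j} := by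
    simp only [coordProj_finset, Finset.sum_mul]
    simp only [Finset.mul_sum]
  simp only [h]
  exact Finset.sum_powerset_sum_sum_sdiff F _ fun i => by
    rw [coordProj_singleton_mul_mul_coordProj_singleton, hR, zero_smul]

theorem exists_subset_norm_compression_apply_le [DecidableEq ι] {R : H →L[ℂ] H}
    (hR : ∀ i, ⟪e i, R (e i)⟫_ℂ = 0) (F : Finset ι) (x : H) :
    ∃ S ⊆ F, ‖(e.coordProj F * R * e.coordProj F) x‖ ≤
      4 * ‖(e.coordProj S * R * e.coordProj ↑(F \ S)) x‖ := by
  set a := ‖(e.coordProj F * R * e.coordProj F) x‖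
  have hpow : (2 : ℝ) ^ F.card ≤ 4 * 2 ^ (F.card - 2) := by
    rw [show (4 : ℝ) = 2 ^ 2 by norm_num, ← pow_add]
    exact pow_le_pow_right₀ one_le_two (by omega)
  have hsum : ∑ _S ∈ F.powerset, a ≤
      ∑ S ∈ F.powerset, 4 * ‖(e.coordProj S * R * e.coordProj ↑(F \ S)) x‖ := by
    calc ∑ _S ∈ F.powerset, a = 2 ^ F.card * a := by simp
      _ ≤ 4 * (2 ^ (F.card - 2) * a) := by rw [← mul_assoc]; gcongr
      _ = 4 * ‖∑ S ∈ F.powerset, (e.coordProj S * R * e.coordProj ↑(F \ S)) x‖ := by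
        rw [← sum_apply, sum_powerset_coordProj_mul_mul_coordProj_sdiff e hR, smul_apply,
          RCLike.norm_nsmul ℂ, nsmul_eq_mul]
        push_cast; rfl
      _ ≤ _ := by rw [← Finset.mul_sum]; gcongr; exact norm_sum_le _ _
  obtain ⟨S, hS, h⟩ := Finset.exists_le_of_sum_le (Finset.powerset_nonempty F) hsum
  exact ⟨S, Finset.mem_powerset.1 hS, h⟩

end Basic

theorem isSelfAdjoint_coordProj {ι : Type*} (e : HilbertBasis ι ℂ H) (A : Set ι) :
    IsSelfAdjoint (e.coordProj A) := by
  rw [isSelfAdjoint_iff_isSymmetric]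
  intro x y
  rw [← e.repr.inner_map_map, ← e.repr.inner_map_map x, lp.inner_eq_tsum, lp.inner_eq_tsum]
  congr 1 with i
  by_cases h : i ∈ A <;> simp [h]

variable (e : HilbertBasis ℕ ℂ H)

section Tails

omit [CompleteSpace H]

theorem coordProj_Ici (n : ℕ) : e.coordProj (Ici n) = 1 - e.coordProj (Iio n) := by
  rw [← compl_Iio, coordProj_compl]

theorem coordProj_Iio_add_coordProj_Ico_add_coordProj_Ici {a b : ℕ} (h : a ≤ b) :
    e.coordProj (Iio a) + e.coordProj (Ico a b) + e.coordProj (Ici b) = 1 := by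
  rw [← coordProj_union _ ((Iio_disjoint_Ici le_rfl).mono_right Ico_subset_Ici_self),
    Iio_union_Ico_eq_Iio h, coordProj_Ici, add_sub_cancel]

theorem tendsto_coordProj_Iio (x : H) :
    Tendsto (fun n => e.coordProj (Iio n) x) atTop (𝓝 x) := by
  simpa [← Finset.coe_range, coordProj_finset_apply] using (e.hasSum_repr x).tendsto_sum_nat

theorem tendsto_coordProj_Ici (x : H) :
    Tendsto (fun n => e.coordProj (Ici n) x) atTop (𝓝 0) := by
  simpa [coordProj_Ici] using (e.tendsto_coordProj_Iio x).const_sub x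

theorem tendsto_norm_coordProj_Ici_mul {K : H →L[ℂ] H} (hK : IsCompactOperator K) :
    Tendsto (fun n => ‖e.coordProj (Ici n) * K‖) atTop (𝓝 0) :=
  tendsto_norm_comp_of_isCompactOperator (fun _ => e.norm_coordProj_le _)
    e.tendsto_coordProj_Ici hK

theorem exists_coordProj_Ico_apply_eq_self_lt_norm {T : H →L[ℂ] H} {c : ℝ} {N : ℕ}
    (h : c < ‖T * e.coordProj (Ici N)‖) :
    ∃ M, ∃ x : H, ‖x‖ ≤ 1 ∧ e.coordProj (Ico N M) x = x ∧ c < ‖T x‖ := by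
  obtain ⟨u, hu, hTu⟩ := exists_lt_apply_of_lt_opNorm _ h
  have hlim := ((T.continuous.tendsto _).comp (e.tendsto_coordProj_Iio
    (e.coordProj (Ici N) u))).norm
  obtain ⟨M, hM⟩ := (hlim.eventually_const_lt hTu).exists
  have hx : e.coordProj (Iio M) (e.coordProj (Ici N) u) = e.coordProj (Ico N M) u := by
    rw [← mul_apply_eq_comp, coordProj_mul, Iio_inter_Ici]
  refine ⟨M, e.coordProj (Ico N M) u, (e.norm_coordProj_apply_le _ u).trans hu.le, ?_, ?_⟩
  · rw [← mul_apply_eq_comp, coordProj_mul, inter_self]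
  · simpa [hx] using hM

end Tails

theorem tendsto_norm_mul_coordProj_Ici {K : H →L[ℂ] H} (hK : IsCompactOperator K) :
    Tendsto (fun n => ‖K * e.coordProj (Ici n)‖) atTop (𝓝 0) := by
  -- C*-identity: `‖K P‖² = ‖P (K⋆ K) P‖`, and `K⋆ K` is compact.
  have hsq (n : ℕ) : ‖K * e.coordProj (Ici n)‖ ^ 2 ≤ ‖e.coordProj (Ici n) * (star K * K)‖ := by
    set P := e.coordProj (Ici n)
    rw [sq, ← CStarRing.norm_star_mul_self, star_mul, (e.isSelfAdjoint_coordProj _).star_eq]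
    calc ‖P * star K * (K * P)‖ = ‖P * (star K * K) * P‖ := by simp only [mul_assoc]
      _ ≤ ‖P * (star K * K)‖ * ‖P‖ := norm_mul_le _ _
      _ ≤ ‖P * (star K * K)‖ := mul_le_of_le_one_right (norm_nonneg _) (e.norm_coordProj_le _)
  have h := squeeze_zero (fun n => by positivity) hsq
    (e.tendsto_norm_coordProj_Ici_mul (hK.clm_mul (star K)))
  simpa [Real.sqrt_sq (norm_nonneg _)] using h.sqrt

theorem isCompactOperator_iff_tendsto_norm_mul_coordProj_Ici (K : H →L[ℂ] H) :
    IsCompactOperator K ↔ Tendsto (fun n => ‖K * e.coordProj (Ici n)‖) atTop (𝓝 0) := by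
  refine ⟨e.tendsto_norm_mul_coordProj_Ici, fun h => ?_⟩
  have hlim : Tendsto (fun n => K * e.coordProj (Iio n)) atTop (𝓝 K) := by
    rw [tendsto_iff_norm_sub_tendsto_zero]
    simpa [coordProj_Ici, mul_sub, norm_sub_rev] using h
  refine isCompactOperator_of_tendsto hlim (Eventually.of_forall fun n => ?_)
  rw [← Finset.coe_range]
  exact (e.isCompactOperator_coordProj_finset _).clm_mul K

theorem tendsto_norm_apply_of_isCompactOperator {K : H →L[ℂ] H} (hK : IsCompactOperator K)
    {L : ℕ → ℕ} (hL : Tendsto L atTop atTop) {x : ℕ → H} (hx1 : ∀ k, ‖x k‖ ≤ 1)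
    (hx : ∀ k, e.coordProj (Ici (L k)) (x k) = x k) :
    Tendsto (fun k => ‖K (x k)‖) atTop (𝓝 0) := by
  refine squeeze_zero (fun k => norm_nonneg _) (fun k => ?_)
    ((e.tendsto_norm_mul_coordProj_Ici hK).comp hL)
  calc ‖K (x k)‖ = ‖(K * e.coordProj (Ici (L k))) (x k)‖ := by rw [mul_apply_eq_comp, hx]
    _ ≤ ‖K * e.coordProj (Ici (L k))‖ * ‖x k‖ := le_opNorm _ _
    _ ≤ ‖K * e.coordProj (Ici (L k))‖ := mul_le_of_le_one_right (norm_nonneg _) (hx1 k)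

theorem exists_gliding_hump_step {R : H →L[ℂ] H} {ε : ℝ} (hε : 0 < ε)
    (hR : ∃ᶠ n in atTop, ε ≤ ‖R * e.coordProj (Ici n)‖) (L : ℕ) :
    ∃ L' > L, ∃ x : H, ‖x‖ ≤ 1 ∧ e.coordProj (Ico L L') x = x ∧
      ε / 4 ≤ ‖e.coordProj (Ico L L') (R x)‖ := by
  -- `P_{<L} R` has finite rank, so it is small on vectors supported far enough out.
  have hhead := e.tendsto_norm_mul_coordProj_Ici
    ((e.isCompactOperator_coordProj_finset (Finset.range L)).mul_clm R)
  rw [Finset.coe_range] at hhead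
  obtain ⟨N, hRN, hN, hLN⟩ := (hR.and_eventually ((hhead.eventually_lt_const
    (by positivity : 0 < ε / 8)).and (eventually_ge_atTop L))).exists
  obtain ⟨M, x, hx1, hxNM, hRx⟩ := e.exists_coordProj_Ico_apply_eq_self_lt_norm
    ((half_lt_self hε).trans_le hRN)
  obtain ⟨L', hL', hML', hLL'⟩ := (((e.tendsto_coordProj_Ici (R x)).norm.eventually_lt_const
    (by rw [norm_zero]; positivity : ‖(0 : H)‖ < ε / 8)).and
    ((eventually_ge_atTop M).and (eventually_gt_atTop L))).exists
  refine ⟨L', hLL', x, hx1, e.coordProj_apply_eq_self_of_subset (Ico_subset_Ico hLN hML') hxNM, ?_⟩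
  have hxN := e.coordProj_apply_eq_self_of_subset Ico_subset_Ici_self hxNM
  have hhead' : ‖e.coordProj (Iio L) (R x)‖ < ε / 8 := by
    calc ‖e.coordProj (Iio L) (R x)‖ = ‖(e.coordProj (Iio L) * R * e.coordProj (Ici N)) x‖ := by
          simp [hxN]
      _ ≤ ‖e.coordProj (Iio L) * R * e.coordProj (Ici N)‖ * ‖x‖ := le_opNorm _ _
      _ < ε / 8 := lt_of_le_of_lt (mul_le_of_le_one_right (norm_nonneg _) hx1) hN
  have hsplit := congrArg (· (R x))
    (e.coordProj_Iio_add_coordProj_Ico_add_coordProj_Ici hLL'.le)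
  simp only [add_apply, one_apply_eq_self] at hsplit
  have := hsplit ▸ norm_add₃_le (a := e.coordProj (Iio L) (R x))
    (b := e.coordProj (Ico L L') (R x)) (c := e.coordProj (Ici L') (R x))
  linarith

theorem exists_gliding_hump {R : H →L[ℂ] H} {ε : ℝ} (hε : 0 < ε)
    (hR : ∃ᶠ n in atTop, ε ≤ ‖R * e.coordProj (Ici n)‖) :
    ∃ L : ℕ → ℕ, StrictMono L ∧ ∃ x : ℕ → H, ∀ k, ‖x k‖ ≤ 1 ∧
      e.coordProj (Ico (L k) (L (k + 1))) (x k) = x k ∧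
      ε / 4 ≤ ‖e.coordProj (Ico (L k) (L (k + 1))) (R (x k))‖ := by
  choose L' hL' x hx using e.exists_gliding_hump_step hε hR
  refine ⟨fun k => L'^[k] 0, strictMono_nat_of_lt_succ fun k => ?_, fun k => x (L'^[k] 0),
    fun k => ?_⟩
  · rw [Function.iterate_succ_apply']
    exact hL' _
  · simpa only [Function.iterate_succ_apply'] using hx _

theorem isCompactOperator_of_forall_isCompactOperator_corner {R : H →L[ℂ] H}
    (hR : ∀ n, ⟪e n, R (e n)⟫_ℂ = 0)
    (hcorner : ∀ A, IsCompactOperator (e.coordProj A * R * e.coordProj Aᶜ)) :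
    IsCompactOperator R := by
  by_contra hRc
  rw [isCompactOperator_iff_tendsto_norm_mul_coordProj_Ici, NormedAddGroup.tendsto_nhds_zero]
    at hRc
  push Not at hRc
  obtain ⟨ε, hε, hfreq⟩ := hRc
  obtain ⟨L, hL, x, hx⟩ := e.exists_gliding_hump hε (by simpa using hfreq)
  choose hx1 hxW hRx using hx
  set W : ℕ → Set ℕ := fun k => Ico (L k) (L (k + 1))
  choose S hSW hS using fun k =>
    e.exists_subset_norm_compression_apply_le hR (Finset.Ico (L k) (L (k + 1))) (x k)
  set A := ⋃ k, (S k : Set ℕ)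
  have hAW (k : ℕ) : Aᶜ ∩ W k = W k \ S k :=
    compl_iUnion_inter_eq_diff hL.monotone.pairwise_disjoint_on_Ico_succ
      (fun j => by simpa using Finset.coe_subset.2 (hSW j)) k
  have hlow (k : ℕ) : ε / 16 ≤ ‖(e.coordProj A * R * e.coordProj Aᶜ) (x k)‖ := by
    have hxA : e.coordProj Aᶜ (x k) = e.coordProj (W k \ S k) (x k) := by
      rw [← hAW, ← coordProj_mul, mul_apply_eq_comp, hxW]
    have := hS k
    simp only [Finset.coe_Ico, Finset.coe_sdiff, mul_apply_eq_comp, hxW] at this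
    calc ε / 16 ≤ ‖e.coordProj (S k) (R (e.coordProj (W k \ S k) (x k)))‖ := by
          linarith [hRx k]
      _ ≤ ‖(e.coordProj A * R * e.coordProj Aᶜ) (x k)‖ := by
          rw [mul_apply_eq_comp, mul_apply_eq_comp, hxA]
          exact e.norm_coordProj_apply_mono (subset_iUnion (fun j => (S j : Set ℕ)) k) _
  have hup := e.tendsto_norm_apply_of_isCompactOperator (hcorner A) hL.tendsto_atTop hx1
    fun k => e.coordProj_apply_eq_self_of_subset Ico_subset_Ici_self (hxW k)
  obtain ⟨k, hk⟩ := (hup.eventually_lt_const (by positivity : 0 < ε / 16)).exists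
  exact (hlow k).not_gt hk

end HilbertBasis

section IsDiagonal

variable {e : HilbertBasis ℕ ℂ H}

omit [CompleteSpace H]

theorem IsDiagonal.apply_self {D : H →L[ℂ] H} (hD : IsDiagonal e D) (n : ℕ) :
    D (e n) = ⟪e n, D (e n)⟫_ℂ • e n := by
  classical
  refine e.repr.injective (lp.ext (funext fun m => ?_))
  obtain rfl | h := eq_or_ne m n
  · simp [e.repr_apply_apply, e.repr_self]
  · simp [e.repr_apply_apply, hD n m h.symm, e.repr_self, Pi.single_eq_of_ne h]

theorem IsDiagonal.commute {D D' : H →L[ℂ] H} (hD : IsDiagonal e D) (hD' : IsDiagonal e D') :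
    Commute D D' :=
  e.ext fun n => by
    obtain ⟨a, ha⟩ : ∃ a : ℂ, D (e n) = a • e n := ⟨_, hD.apply_self n⟩
    obtain ⟨b, hb⟩ : ∃ b : ℂ, D' (e n) = b • e n := ⟨_, hD'.apply_self n⟩
    simp only [mul_apply_eq_comp, ha, hb, map_smul, smul_comm a b]

theorem HilbertBasis.isDiagonal_diagonal (b : ℓ^∞(ℕ, ℂ)) : IsDiagonal e (e.diagonal b) :=
  fun n m h => by rw [diagonal_apply_self, inner_smul_right, e.orthonormal.2 h.symm, mul_zero]

theorem HilbertBasis.isDiagonal_coordProj (A : Set ℕ) : IsDiagonal e (e.coordProj A) :=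
  e.isDiagonal_diagonal _

theorem HilbertBasis.isDiagonal_diagonalPart (T : H →L[ℂ] H) : IsDiagonal e (e.diagonalPart T) :=
  e.isDiagonal_diagonal _

end IsDiagonal

section DplusK

variable {e : HilbertBasis ℕ ℂ H}

theorem mem_DplusK_iff {T : H →L[ℂ] H} :
    T ∈ DplusK e ↔ ∀ D, IsDiagonal e D → IsCompactOperator (T * D - D * T) := by
  constructor
  · rintro ⟨D', K, hD', hK, rfl⟩ D hD
    rw [add_mul, mul_add, (hD'.commute hD).eq, add_sub_add_left_eq_sub]
    exact (hK.mul_clm D).sub (hK.clm_mul D)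
  · intro hT
    set R := T - e.diagonalPart T
    have hR (n : ℕ) : ⟪e n, R (e n)⟫_ℂ = 0 := by
      simp [R, e.inner_diagonalPart_apply_self]
    have hcorner (A : Set ℕ) : IsCompactOperator (e.coordProj A * R * e.coordProj Aᶜ) := by
      have h0 := e.coordProj_mul_coordProj_compl A
      have hc := (e.isDiagonal_diagonalPart T).commute (e.isDiagonal_coordProj Aᶜ)
      have : e.coordProj A * R * e.coordProj Aᶜ =
          e.coordProj A * (T * e.coordProj Aᶜ - e.coordProj Aᶜ * T) := by
        simp only [R, sub_mul, mul_sub, mul_assoc, hc.eq,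
          ← mul_assoc (e.coordProj A) (e.coordProj Aᶜ), h0, zero_mul, sub_zero]
      rw [this]
      exact (hT _ (e.isDiagonal_coordProj Aᶜ)).clm_mul _
    exact ⟨e.diagonalPart T, R, e.isDiagonal_diagonalPart T,
      e.isCompactOperator_of_forall_isCompactOperator_corner hR hcorner, (add_sub_cancel _ _).symm⟩

theorem mapsTo_conj_DplusK {V : H →L[ℂ] H}
    (hV : ∀ D, IsDiagonal e D → V * D * star V ∈ DplusK e) :
    MapsTo (fun T => V * T * star V) (DplusK e) (DplusK e) := by
  rintro _ ⟨D, K, hD, hK, rfl⟩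
  obtain ⟨D', K', hD', hK', h⟩ := hV D hD
  refine ⟨D', K' + V * K * star V, hD', hK'.add ((hK.clm_mul V).mul_clm _), ?_⟩
  simp only [mul_add, add_mul, h, add_assoc]

theorem star_mul_mul_mem_DplusK {U : H →L[ℂ] H} (hU : U ∈ unitary (H →L[ℂ] H))
    (hdiag : ∀ D, IsDiagonal e D → U * D * star U ∈ DplusK e) {D : H →L[ℂ] H}
    (hD : IsDiagonal e D) : star U * D * U ∈ DplusK e := by
  refine mem_DplusK_iff.2 fun D₂ hD₂ => ?_
  have h : star U * D * U * D₂ - D₂ * (star U * D * U) =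
      star U * (D * (U * D₂ * star U) - U * D₂ * star U * D) * U := by
    rw [mul_sub, sub_mul]
    congr 1
    · simp only [mul_assoc, Unitary.star_mul_self_of_mem hU, mul_one]
    · simp only [← mul_assoc, Unitary.star_mul_self_of_mem hU, one_mul]
  have hc : IsCompactOperator (D * (U * D₂ * star U) - U * D₂ * star U * D) := by
    simpa using (mem_DplusK_iff.1 (hdiag D₂ hD₂) D hD).neg
  rw [h]
  exact (hc.clm_mul _).mul_clm _

end DplusK

/-- If `U` is a unitary on `H` with `U D U* ∈ D+K` for every diagonal `D`, then `Ad(U)` restricts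
to a *-automorphism of `D+K`; in particular it maps `D+K` bijectively onto `D+K`. -/
theorem adU_automorphism_of_maps_diagonals (e : HilbertBasis ℕ ℂ H)
    (U : H →L[ℂ] H) (hU : U ∈ unitary (H →L[ℂ] H))
    (hdiag : ∀ D : H →L[ℂ] H, IsDiagonal e D →
      U * D * ContinuousLinearMap.adjoint U ∈ DplusK e) :
    Set.BijOn (fun T => U * T * ContinuousLinearMap.adjoint U) (DplusK e) (DplusK e) := by
  simp only [← star_eq_adjoint] at hdiag ⊢
  refine InvOn.bijOn (f' := fun T => star U * T * U) ⟨fun T _ => ?_, fun T _ => ?_⟩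
    (mapsTo_conj_DplusK hdiag) ?_
  · exact (Unitary.conjStarAlgAut ℂ _ ⟨U, hU⟩).symm_apply_apply T
  · exact (Unitary.conjStarAlgAut ℂ _ ⟨U, hU⟩).apply_symm_apply T
  · simpa only [star_star] using mapsTo_conj_DplusK (V := star U)
      (by simpa only [star_star] using fun D hD => star_mul_mul_mem_DplusK hU hdiag hD)
end

section
/- Let σ be a permutation of ℕ with infinite support (σ(n) ≠ n for infinitely many n), U_σ the unitary permuting the basis (U_σ e_n = e_{σ(n)}), and T = D + K ∈ D+K. Then ‖U_σ − T‖ ≥ 1; and if moreover T is unitary, ‖U_σ − T‖ ≥ √2. -/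
/-! Off the diagonal, the matrix coefficients of a diagonal-plus-compact `T = D + K` are those of
`K`, and a compact operator sends an orthonormal sequence to a null sequence. Hence
`⟪e (σ n), T (e n)⟫ → 0` along the infinite support of `σ`. Testing `Uσ - T` on `e n` gives
`‖Uσ - T‖ ≥ ‖1 - ⟪e (σ n), T (e n)⟫‖ → 1`, and for unitary `T` also
`‖Uσ - T‖² ≥ ‖e (σ n) - T (e n)‖² = 2 - 2 Re ⟪e (σ n), T (e n)⟫ → 2`. -/

open scoped InnerProductSpace
open ContinuousLinearMap

variable {H : Type*} [NormedAddCommGroup H] [InnerProductSpace ℂ H] [CompleteSpace H]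

open Filter Topology

section Orthonormal

variable {𝕜 E F ι : Type*} [RCLike 𝕜] [NormedAddCommGroup E] [InnerProductSpace 𝕜 E]
  [NormedAddCommGroup F] [InnerProductSpace 𝕜 F] {v : ι → E}

theorem Orthonormal.tendsto_inner_cofinite (hv : Orthonormal 𝕜 v) (x : E) :
    Tendsto (fun i => ⟪x, v i⟫_𝕜) cofinite (𝓝 0) := by
  have hsq := (hv.inner_products_summable x).tendsto_cofinite_zero.sqrt
  simp only [Real.sqrt_sq (norm_nonneg _), Real.sqrt_zero, norm_inner_symm] at hsq
  exact tendsto_zero_iff_norm_tendsto_zero.mpr hsq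

/-- The images lie in a compact set, and each of their cluster points `y` satisfies `⟪y, y⟫ = 0`
since the images tend to `0` weakly. -/
theorem IsCompactOperator.tendsto_apply_orthonormal [CompleteSpace E] [CompleteSpace F]
    {K : E →L[𝕜] F} (hK : IsCompactOperator K) (hv : Orthonormal 𝕜 v) :
    Tendsto (fun i => K (v i)) cofinite (𝓝 0) := by
  have hcompact := hK.isCompact_closure_image_closedBall (f := (K : E →ₗ[𝕜] F)) 1
  refine hcompact.tendsto_nhds_of_unique_mapClusterPt
    (Eventually.of_forall fun i => subset_closure ⟨v i, by simp [hv.1 i], rfl⟩) fun y _ hy => ?_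
  have hweak : Tendsto (fun i => ⟪y, K (v i)⟫_𝕜) cofinite (𝓝 0) := by
    simpa only [adjoint_inner_left] using hv.tendsto_inner_cofinite (adjoint K y)
  have hcluster : MapClusterPt ⟪y, y⟫_𝕜 cofinite fun i => ⟪y, K (v i)⟫_𝕜 :=
    hy.continuousAt_comp (f := fun z => ⟪y, z⟫_𝕜)
      (continuous_const.inner continuous_id).continuousAt
  exact inner_self_eq_zero.mp (eq_of_nhds_neBot (hcluster.clusterPt.mono hweak))

end Orthonormal

section OperatorNorm

variable {𝕜 E F : Type*} [RCLike 𝕜] [NormedAddCommGroup E] [InnerProductSpace 𝕜 E]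
  [NormedAddCommGroup F] [InnerProductSpace 𝕜 F]

theorem norm_one_sub_inner_le_opNorm_sub (U T : E →L[𝕜] F) {x : E} (hx : ‖x‖ = 1)
    (hUx : ‖U x‖ = 1) : ‖1 - ⟪U x, T x⟫_𝕜‖ ≤ ‖U - T‖ := by
  have hUxUx : ⟪U x, U x⟫_𝕜 = 1 := by simp [inner_self_eq_norm_sq_to_K, hUx]
  calc ‖1 - ⟪U x, T x⟫_𝕜‖ = ‖⟪U x, (U - T) x⟫_𝕜‖ := by rw [sub_apply, inner_sub_right, hUxUx]
    _ ≤ ‖U x‖ * ‖(U - T) x‖ := norm_inner_le_norm _ _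
    _ ≤ ‖U - T‖ := by simpa [hUx, hx] using (U - T).le_opNorm x

theorem two_sub_two_re_inner_le_opNorm_sub_sq (U T : E →L[𝕜] F) {x : E} (hx : ‖x‖ = 1)
    (hUx : ‖U x‖ = 1) (hTx : ‖T x‖ = 1) : 2 - 2 * RCLike.re ⟪U x, T x⟫_𝕜 ≤ ‖U - T‖ ^ 2 := by
  calc 2 - 2 * RCLike.re ⟪U x, T x⟫_𝕜 = ‖(U - T) x‖ ^ 2 := by
        rw [sub_apply, @norm_sub_sq 𝕜, hUx, hTx]; ring
    _ ≤ ‖U - T‖ ^ 2 := by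
        gcongr
        simpa [hx] using (U - T).le_opNorm x

end OperatorNorm

theorem tendsto_inner_apply_of_mem_DplusK {e : HilbertBasis ℕ ℂ H} {T : H →L[ℂ] H}
    (hT : T ∈ DplusK e) (f : ℕ → ℕ) :
    Tendsto (fun n => ⟪e (f n), T (e n)⟫_ℂ) (cofinite ⊓ 𝓟 {n | f n ≠ n}) (𝓝 0) := by
  obtain ⟨D, K, hD, hK, rfl⟩ := hT
  have hKe : Tendsto (fun n => ‖K (e n)‖) (cofinite ⊓ 𝓟 {n | f n ≠ n}) (𝓝 0) := by
    simpa using (hK.tendsto_apply_orthonormal e.orthonormal).norm.mono_left inf_le_left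
  refine squeeze_zero_norm' ?_ hKe
  filter_upwards [mem_inf_of_right (mem_principal_self _)] with n hn
  calc ‖⟪e (f n), (D + K) (e n)⟫_ℂ‖ = ‖⟪e (f n), K (e n)⟫_ℂ‖ := by
        rw [add_apply, inner_add_right, hD n (f n) (Ne.symm hn), zero_add]
    _ ≤ ‖K (e n)‖ := by
        simpa [e.orthonormal.1] using norm_inner_le_norm (𝕜 := ℂ) (e (f n)) (K (e n))

/-- If `σ` is a permutation of `ℕ` with infinite support and `U_σ` is the unitary permuting the
basis, then `‖U_σ - T‖ ≥ 1` for every `T ∈ D+K`, and `‖U_σ - T‖ ≥ √2` if moreover `T` is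
unitary. -/
theorem dist_permutation_unitary_to_DplusK (e : HilbertBasis ℕ ℂ H)
    (σ : Equiv.Perm ℕ) (hσ : {n : ℕ | σ n ≠ n}.Infinite)
    (Uσ : H →L[ℂ] H) (hUσ : ∀ n : ℕ, Uσ (e n) = e (σ n))
    (T : H →L[ℂ] H) (hT : T ∈ DplusK e) :
    1 ≤ ‖Uσ - T‖ ∧ (T ∈ unitary (H →L[ℂ] H) → Real.sqrt 2 ≤ ‖Uσ - T‖) := by
  have := hσ.cofinite_inf_principal_neBot
  have hcoeff := tendsto_inner_apply_of_mem_DplusK hT σ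
  have he : ∀ n, ‖e n‖ = 1 := e.orthonormal.1
  have hUe : ∀ n, ‖Uσ (e n)‖ = 1 := fun n => by rw [hUσ, he]
  constructor
  · have hlim : Tendsto (fun n => ‖1 - ⟪Uσ (e n), T (e n)⟫_ℂ‖) (cofinite ⊓ 𝓟 {n | σ n ≠ n})
        (𝓝 1) := by
      simpa [hUσ] using (hcoeff.const_sub 1).norm
    exact le_of_tendsto' hlim fun n => norm_one_sub_inner_le_opNorm_sub Uσ T (he n) (hUe n)
  · intro hTu
    rw [Real.sqrt_le_left (norm_nonneg _)]
    have hlim : Tendsto (fun n => 2 - 2 * RCLike.re ⟪Uσ (e n), T (e n)⟫_ℂ)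
        (cofinite ⊓ 𝓟 {n | σ n ≠ n}) (𝓝 2) := by
      simpa [hUσ] using (((RCLike.continuous_re.tendsto 0).comp hcoeff).const_mul 2).const_sub 2
    exact le_of_tendsto' hlim fun n => two_sub_two_re_inner_le_opNorm_sub_sq Uσ T (he n) (hUe n)
      (by rw [norm_map_of_mem_unitary hTu, he])
end
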